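/- arXiv:2604.02864 — 3 statements merged into one kernel-verified Lean document; each statement's English description precedes it below -/
import Mathlib

section
/- If 𝔥 is a solvable Lie algebra generated by finitely many elements such that [𝔥,𝔥] is nilpotent and each generator acts on 𝔥 by a locally finite adjoint operator (i.e., every element lies in a finite-dimensional ad-invariant subspace), then 𝔥 is finite-dimensional. -/
/-!
Let `I = [L, L]` and pass to `L / [I, I]`, where `I` becomes abelian, so that the operators
`ad aᵢ` commute on `I`. Since each is locally finite, taking `ad aᵢ`-invariant hulls one generator
after another enlarges the span of the brackets `[aᵢ, aⱼ]` to a finite-dimensional subspace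
`U ⊆ I` invariant under all `ad aᵢ` (commutation preserves the earlier invariances). Then
`span {aᵢ} + U` is stable under every `ad aᵢ`, hence is everything, and `L / [I, I]` is
finite-dimensional. So is `I / [I, I]`; as `I` is nilpotent, each layer `Cᵐ I / Cᵐ⁺¹ I` of its
lower central series is spanned by brackets of lifts of finite spanning sets of `I / [I, I]` and
of the previous layer, so `I`, and with it `L`, is finite-dimensional.
-/

namespace Module.End

section Hull

variable {R M : Type*} [Semiring R] [AddCommMonoid M] [Module R M]

def invtHull (T : Module.End R M) (V : Submodule R M) : Submodule R M :=
  sInf {W | V ≤ W ∧ W ∈ T.invtSubmodule}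

variable {T S : Module.End R M} {V W : Submodule R M}

lemma le_invtHull : V ≤ T.invtHull V :=
  le_sInf fun _ hW => hW.1

lemma invtHull_le (hVW : V ≤ W) (hW : W ∈ T.invtSubmodule) : T.invtHull V ≤ W :=
  sInf_le ⟨hVW, hW⟩

lemma invtHull_mem_invtSubmodule : T.invtHull V ∈ T.invtSubmodule := fun _ hx =>
  Submodule.mem_sInf.mpr fun W hW => hW.2 (Submodule.mem_sInf.mp hx W hW)

/-- `S⁻¹ (T.invtHull V)` is `T`-invariant and contains `V`. -/
lemma invtHull_mem_invtSubmodule_of_commute (hST : Commute S T) (hV : V ∈ S.invtSubmodule) :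
    T.invtHull V ∈ S.invtSubmodule := by
  refine invtHull_le (fun x hx => le_invtHull (hV hx)) fun x hx => ?_
  change S (T x) ∈ T.invtHull V
  rw [← Module.End.mul_apply, hST.eq, Module.End.mul_apply]
  exact invtHull_mem_invtSubmodule hx

end Hull

variable {k M : Type*} [Field k] [AddCommGroup M] [Module k M]

def IsLocallyFinite (T : Module.End k M) : Prop :=
  ∀ x : M, ∃ W : Submodule k M, FiniteDimensional k W ∧ x ∈ W ∧ W ∈ T.invtSubmodule

variable {T : Module.End k M}

lemma IsLocallyFinite.exists_finiteDimensional_le (hT : T.IsLocallyFinite)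
    (V : Submodule k M) [FiniteDimensional k V] :
    ∃ W : Submodule k M, FiniteDimensional k W ∧ V ≤ W ∧ W ∈ T.invtSubmodule := by
  induction V, Module.Finite.iff_fg.mp ‹_› using Submodule.fg_induction with
  | singleton x =>
    obtain ⟨W, hW, hxW, hWT⟩ := hT x
    exact ⟨W, hW, (Submodule.span_singleton_le_iff_mem x W).mpr hxW, hWT⟩
  | sup V₁ V₂ hV₁ hV₂ ih₁ ih₂ =>
    have := Module.Finite.iff_fg.mpr hV₁
    have := Module.Finite.iff_fg.mpr hV₂
    obtain ⟨W₁, _, hVW₁, hW₁⟩ := ih₁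
    obtain ⟨W₂, _, hVW₂, hW₂⟩ := ih₂
    exact ⟨W₁ ⊔ W₂, inferInstance, sup_le_sup hVW₁ hVW₂, invtSubmodule.sup_mem hW₁ hW₂⟩

lemma IsLocallyFinite.finiteDimensional_invtHull (hT : T.IsLocallyFinite)
    (V : Submodule k M) [FiniteDimensional k V] : FiniteDimensional k (T.invtHull V) := by
  obtain ⟨W, hW, hVW, hWT⟩ := hT.exists_finiteDimensional_le V
  exact Submodule.finiteDimensional_of_le (invtHull_le hVW hWT)

lemma exists_finiteDimensional_forall_mem_invtSubmodule {ι : Type*} (s : Finset ι)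
    {T : ι → Module.End k M} (hT : ∀ i ∈ s, (T i).IsLocallyFinite)
    (hcomm : ∀ i ∈ s, ∀ j ∈ s, Commute (T i) (T j)) (V : Submodule k M) [FiniteDimensional k V] :
    ∃ U : Submodule k M, FiniteDimensional k U ∧ V ≤ U ∧ ∀ i ∈ s, U ∈ (T i).invtSubmodule := by
  classical
  induction s using Finset.induction_on with
  | empty => exact ⟨V, inferInstance, le_rfl, by simp⟩
  | insert i s _ ih =>
    obtain ⟨U, _, hVU, hU⟩ := ih (fun j hj => hT j (Finset.mem_insert_of_mem hj))
      fun j hj l hl => hcomm j (Finset.mem_insert_of_mem hj) l (Finset.mem_insert_of_mem hl)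
    refine ⟨(T i).invtHull U, (hT i (Finset.mem_insert_self i s)).finiteDimensional_invtHull U,
      hVU.trans le_invtHull, fun j hj => ?_⟩
    rcases Finset.mem_insert.mp hj with rfl | hj
    · exact invtHull_mem_invtSubmodule
    · exact invtHull_mem_invtSubmodule_of_commute
        (hcomm j (Finset.mem_insert_of_mem hj) i (Finset.mem_insert_self i s)) (hU j hj)

lemma IsLocallyFinite.restrict (hT : T.IsLocallyFinite) {N : Submodule k M}
    (hN : N ∈ T.invtSubmodule) : IsLocallyFinite (T.restrict hN) := fun x => by
  obtain ⟨W, _, hxW, hWT⟩ := hT x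
  refine ⟨W.comap N.subtype, ?_, hxW, fun y hy => hWT hy⟩
  exact Module.Finite.of_injective (N.subtype.restrict (p := W.comap N.subtype) fun _ h => h)
    (by simp)

lemma IsLocallyFinite.of_comp_eq {N : Type*} [AddCommGroup N] [Module k N]
    (hT : T.IsLocallyFinite) {T' : Module.End k N} {f : M →ₗ[k] N} (hf : Function.Surjective f)
    (hfT : f ∘ₗ T = T' ∘ₗ f) : T'.IsLocallyFinite := fun y => by
  obtain ⟨x, rfl⟩ := hf y
  obtain ⟨W, _, hxW, hWT⟩ := hT x
  refine ⟨W.map f, inferInstance, Submodule.mem_map_of_mem hxW, ?_⟩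
  rintro _ ⟨w, hw, rfl⟩
  exact ⟨T w, hWT hw, LinearMap.congr_fun hfT w⟩

end Module.End

lemma Submodule.exists_fg_sup_eq_top {R M : Type*} [CommRing R] [AddCommGroup M] [Module R M]
    (N : Submodule R M) [Module.Finite R (M ⧸ N)] : ∃ G : Submodule R M, G.FG ∧ G ⊔ N = ⊤ := by
  obtain ⟨s, hs⟩ := Module.Finite.fg_top (R := R) (M := M ⧸ N)
  have hmk := N.mkQ_surjective
  refine ⟨span R (Function.surjInv hmk '' s), fg_span (s.finite_toSet.image _), ?_⟩
  rw [sup_comm, ← map_mkQ_eq_top, map_span, ← Set.image_comp, Function.comp_surjInv,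
    Set.image_id, hs]

namespace LieModule

variable {R L M : Type*} [CommRing R] [LieRing L] [LieAlgebra R L] [AddCommGroup M] [Module R M]
  [LieRingModule L M] [LieModule R L M]

lemma lie_lowerCentralSeries_one_le (m : ℕ) :
    ⁅lowerCentralSeries R L L 1, lowerCentralSeries R L M m⁆ ≤
      lowerCentralSeries R L M (m + 2) := by
  rw [LieSubmodule.lie_le_iff]
  intro x hx n hn
  rw [← LieSubmodule.mem_toSubmodule, lowerCentralSeries_succ, lowerCentralSeries_zero,
    LieSubmodule.lieIdeal_oper_eq_linear_span'] at hx
  have hsucc {j : ℕ} {y : L} {p : M} (hp : p ∈ lowerCentralSeries R L M j) :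
      ⁅y, p⁆ ∈ lowerCentralSeries R L M (j + 1) := by
    rw [lowerCentralSeries_succ]
    exact LieSubmodule.lie_mem_lie (LieSubmodule.mem_top y) hp
  induction hx using Submodule.span_induction with
  | mem x hx =>
    obtain ⟨y, -, z, -, rfl⟩ := hx
    rw [lie_lie]
    exact sub_mem (hsucc (hsucc hn)) (hsucc (hsucc hn))
  | zero => simp
  | add x y _ _ hx hy => rw [add_lie]; exact add_mem hx hy
  | smul t x _ hx => rw [smul_lie]; exact SMulMemClass.smul_mem t hx

variable [Module.Finite R (L ⧸ lowerCentralSeries R L L 1)]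
  [Module.Finite R (M ⧸ lowerCentralSeries R L M 1)]

lemma exists_fg_lowerCentralSeries_le_sup (m : ℕ) :
    ∃ G : Submodule R M, G.FG ∧ (lowerCentralSeries R L M m).toSubmodule ≤
      G ⊔ (lowerCentralSeries R L M (m + 1)).toSubmodule := by
  induction m with
  | zero =>
    obtain ⟨G, hG, hGM⟩ := (lowerCentralSeries R L M 1).toSubmodule.exists_fg_sup_eq_top
    exact ⟨G, hG, hGM ▸ le_top⟩
  | succ m ih =>
    obtain ⟨G₀, hG₀, hG₀L⟩ := (lowerCentralSeries R L L 1).toSubmodule.exists_fg_sup_eq_top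
    obtain ⟨G, hG, hGm⟩ := ih
    refine ⟨Submodule.map₂ (toEnd R L M : L →ₗ[R] Module.End R M) G₀ G, hG₀.map₂ _ hG, ?_⟩
    rw [lowerCentralSeries_succ, LieSubmodule.lieIdeal_oper_eq_linear_span', Submodule.span_le]
    rintro _ ⟨x, -, y, hy, rfl⟩
    -- `⁅f + x', g + y'⁆ ≡ ⁅f, g⁆` modulo `Cᵐ⁺² M`, as `x' ∈ C¹ L` and `y' ∈ Cᵐ⁺¹ M`.
    obtain ⟨f, hf, x', hx', rfl⟩ := Submodule.mem_sup.mp (hG₀L ▸ Submodule.mem_top : x ∈ G₀ ⊔ _)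
    obtain ⟨g, hg, y', hy', rfl⟩ := Submodule.mem_sup.mp (hGm hy)
    have hg' : g ∈ lowerCentralSeries R L M m := by
      simpa using sub_mem hy (antitone_lowerCentralSeries R L M m.le_succ hy')
    rw [SetLike.mem_coe, lie_add, add_lie]
    refine add_mem (add_mem (Submodule.mem_sup_left (Submodule.apply_mem_map₂ _ hf hg))
      (Submodule.mem_sup_right ?_)) (Submodule.mem_sup_right ?_)
    · exact lie_lowerCentralSeries_one_le m (LieSubmodule.lie_mem_lie hx' hg')
    · rw [lowerCentralSeries_succ]
      exact LieSubmodule.lie_mem_lie (LieSubmodule.mem_top _) hy'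

theorem finite_of_isNilpotent [IsNilpotent L M] : Module.Finite R M := by
  have hfin (m : ℕ) : ∃ G : Submodule R M, G.FG ∧
      G ⊔ (lowerCentralSeries R L M m).toSubmodule = ⊤ := by
    induction m with
    | zero => exact ⟨⊥, Submodule.fg_bot, by simp⟩
    | succ m ih =>
      obtain ⟨G, hG, hGm⟩ := ih
      obtain ⟨G', hG', hG'm⟩ := exists_fg_lowerCentralSeries_le_sup (R := R) (L := L) (M := M) m
      refine ⟨G ⊔ G', hG.sup hG', ?_⟩
      rw [eq_top_iff, ← hGm, sup_assoc]
      exact sup_le_sup_left hG'm G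
  obtain ⟨c, hc⟩ := IsNilpotent.nilpotent R L M
  obtain ⟨G, hG, hGc⟩ := hfin c
  rw [hc, LieSubmodule.bot_toSubmodule, sup_bot_eq] at hGc
  exact Module.finite_def.mpr (hGc ▸ hG)

end LieModule

lemma LieSubalgebra.toSubmodule_lieSpan_le {R L : Type*} [CommRing R] [LieRing L]
    [LieAlgebra R L] {s : Set L} {V : Submodule R L} (hsV : s ⊆ V)
    (hs : ∀ x ∈ s, ∀ v ∈ V, ⁅x, v⁆ ∈ V) : (LieSubalgebra.lieSpan R L s).toSubmodule ≤ V := by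
  suffices ∀ x ∈ LieSubalgebra.lieSpan R L s, x ∈ V ∧ ∀ v ∈ V, ⁅x, v⁆ ∈ V from
    fun x hx => (this x hx).1
  intro x hx
  induction hx using LieSubalgebra.lieSpan_induction with
  | mem x hx => exact ⟨hsV hx, hs x hx⟩
  | zero => exact ⟨V.zero_mem, fun v _ => by simp⟩
  | add x y _ _ hx hy =>
    exact ⟨add_mem hx.1 hy.1, fun v hv => by rw [add_lie]; exact add_mem (hx.2 v hv) (hy.2 v hv)⟩
  | smul t x _ hx =>
    exact ⟨V.smul_mem t hx.1, fun v hv => by rw [smul_lie]; exact V.smul_mem t (hx.2 v hv)⟩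
  | lie x y _ _ hx hy =>
    exact ⟨hx.2 y hy.1, fun v hv => by
      rw [lie_lie]; exact sub_mem (hx.2 _ (hy.2 v hv)) (hy.2 _ (hx.2 v hv))⟩

namespace LieIdeal

def mkQ {R L : Type*} [CommRing R] [LieRing L] [LieAlgebra R L] (I : LieIdeal R L) :
    L →ₗ⁅R⁆ L ⧸ I :=
  { I.toSubmodule.mkQ with map_lie' := rfl }

variable {k L : Type*} [Field k] [LieRing L] [LieAlgebra k L]

lemma finiteDimensional_quotient_lowerCentralSeries_one (I : LieIdeal k L)
    [FiniteDimensional k (L ⧸ ⁅I, I⁆)] :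
    FiniteDimensional k (I ⧸ LieModule.lowerCentralSeries k I I 1) := by
  let φ : I →ₗ[k] L ⧸ ⁅I, I⁆ := ⁅I, I⁆.toSubmodule.mkQ ∘ₗ I.toSubmodule.subtype
  have hker : LinearMap.ker φ = (LieModule.lowerCentralSeries k I I 1).toSubmodule := by
    ext x
    rw [LinearMap.mem_ker, LieSubmodule.mem_toSubmodule]
    change _ ↔ x ∈ LieAlgebra.derivedSeries k I 1
    rw [derivedSeries_eq_derivedSeriesOfIdeal_comap I 1]
    exact Submodule.Quotient.mk_eq_zero _
  exact Module.Finite.equiv (φ.quotKerEquivRange.symm.trans (Submodule.quotEquivOfEq _ _ hker))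

end LieIdeal

namespace LieAlgebra

variable {k L : Type*} [Field k] [LieRing L] [LieAlgebra k L]

lemma lie_mem_derivedSeries_one (x y : L) : ⁅x, y⁆ ∈ derivedSeries k L 1 :=
  LieSubmodule.lie_mem_lie (LieSubmodule.mem_top x) (LieSubmodule.mem_top y)

theorem finiteDimensional_of_derivedSeries_two_eq_bot {ι : Type*} [Fintype ι] {a : ι → L}
    (hgen : LieSubalgebra.lieSpan k L (Set.range a) = ⊤)
    (hlf : ∀ i, (ad k L (a i)).IsLocallyFinite) (h2 : derivedSeries k L 2 = ⊥) :
    FiniteDimensional k L := by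
  set I := derivedSeries k L 1
  let T (i : ι) : Module.End k I := (ad k L (a i)).restrict fun _ hx => I.lie_mem hx
  have hcomm (i j : ι) : Commute (T i) (T j) := by
    refine LinearMap.ext fun x => Subtype.ext ?_
    have hx : ⁅⁅a i, a j⁆, (x : L)⁆ = 0 := by
      rw [← LieSubmodule.mem_bot (R := k) (L := L), ← h2]
      exact LieSubmodule.lie_mem_lie (lie_mem_derivedSeries_one _ _) x.2
    change ⁅a i, ⁅a j, (x : L)⁆⁆ = ⁅a j, ⁅a i, (x : L)⁆⁆
    rw [leibniz_lie, hx, zero_add]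
  let V₀ : Submodule k I := Submodule.span k
    (Set.range fun p : ι × ι => ⟨⁅a p.1, a p.2⁆, lie_mem_derivedSeries_one _ _⟩)
  have : FiniteDimensional k V₀ := FiniteDimensional.span_of_finite k (Set.finite_range _)
  obtain ⟨U, _, hV₀U, hUT⟩ := Module.End.exists_finiteDimensional_forall_mem_invtSubmodule
    Finset.univ (fun i _ => (hlf i).restrict _) (fun i _ j _ => hcomm i j) V₀
  let W : Submodule k L := U.map I.toSubmodule.subtype
  have hW (i : ι) : (Submodule.span k (Set.range a) ⊔ W).map (ad k L (a i)) ≤ W := by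
    rw [Submodule.map_sup, Submodule.map_span, sup_le_iff, Submodule.span_le]
    constructor
    · rintro _ ⟨_, ⟨j, rfl⟩, rfl⟩
      exact ⟨_, hV₀U (Submodule.subset_span ⟨(i, j), rfl⟩), rfl⟩
    · rintro _ ⟨_, ⟨u, hu, rfl⟩, rfl⟩
      exact ⟨T i u, hUT i (Finset.mem_univ i) hu, rfl⟩
  have htop : Submodule.span k (Set.range a) ⊔ W = ⊤ := by
    rw [eq_top_iff, ← LieSubalgebra.top_toSubmodule, ← hgen]
    refine LieSubalgebra.toSubmodule_lieSpan_le (Submodule.span_le.mp le_sup_left) ?_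
    rintro _ ⟨i, rfl⟩ v hv
    exact Submodule.mem_sup_right (hW i ⟨v, hv, rfl⟩)
  have : FiniteDimensional k (Submodule.span k (Set.range a)) :=
    FiniteDimensional.span_of_finite k (Set.finite_range a)
  exact Module.finite_def.mpr (htop ▸ Module.Finite.iff_fg.mp inferInstance)

theorem finiteDimensional_quotient_derivedSeries_two {ι : Type*} [Fintype ι] {a : ι → L}
    (hgen : LieSubalgebra.lieSpan k L (Set.range a) = ⊤)
    (hlf : ∀ i, (ad k L (a i)).IsLocallyFinite) :
    FiniteDimensional k (L ⧸ derivedSeries k L 2) := by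
  set π := (derivedSeries k L 2).mkQ
  have hπ : Function.Surjective π := Submodule.mkQ_surjective _
  refine finiteDimensional_of_derivedSeries_two_eq_bot (a := π ∘ a) ?_
    (fun i => (hlf i).of_comp_eq hπ rfl) ?_
  · rw [Set.range_comp, ← LieSubalgebra.map_lieSpan, hgen, ← LieHom.range_eq_map,
      LieHom.range_eq_top]
    exact hπ
  · rw [← LieIdeal.derivedSeries_map_eq 2 hπ, LieIdeal.map_eq_bot_iff]
    exact fun x hx => (Submodule.Quotient.mk_eq_zero _).mpr hx

end LieAlgebra

theorem stmt1_general (k L : Type) [Field k] [LieRing L] [LieAlgebra k L]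
    (n : ℕ) (a : Fin n → L)
    (hgen : LieSubalgebra.lieSpan k L (Set.range a) = ⊤)
    (hlf : ∀ i : Fin n, ∀ x : L, ∃ W : Submodule k L,
      FiniteDimensional k W ∧ x ∈ W ∧ ∀ y ∈ W, ⁅a i, y⁆ ∈ W)
    (hnil : LieModule.IsNilpotent ↥(LieAlgebra.derivedSeries k L 1) ↥(LieAlgebra.derivedSeries k L 1)) :
    FiniteDimensional k L := by
  set I := LieAlgebra.derivedSeries k L 1
  have : FiniteDimensional k (L ⧸ ⁅I, I⁆) :=
    LieAlgebra.finiteDimensional_quotient_derivedSeries_two hgen hlf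
  have : FiniteDimensional k I :=
    have := I.finiteDimensional_quotient_lowerCentralSeries_one
    LieModule.finite_of_isNilpotent (L := I)
  have : FiniteDimensional k ⁅I, I⁆.toSubmodule :=
    Submodule.finiteDimensional_of_le (LieSubmodule.lie_le_left I I)
  exact Module.Finite.of_submodule_quotient ⁅I, I⁆.toSubmodule

/-- A solvable Lie algebra generated by finitely many elements whose
adjoint operators are locally finite, and whose derived ideal is nilpotent, is
finite-dimensional. -/
theorem stmt1 (k L : Type) [Field k] [CharZero k] [LieRing L] [LieAlgebra k L]
    [LieAlgebra.IsSolvable L] (n : ℕ) (a : Fin n → L)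
    (hgen : LieSubalgebra.lieSpan k L (Set.range a) = ⊤)
    (hlf : ∀ i : Fin n, ∀ x : L, ∃ W : Submodule k L,
      FiniteDimensional k W ∧ x ∈ W ∧ ∀ y ∈ W, ⁅a i, y⁆ ∈ W)
    (hnil : LieModule.IsNilpotent ↥(LieAlgebra.derivedSeries k L 1) ↥(LieAlgebra.derivedSeries k L 1)) :
    FiniteDimensional k L :=
  stmt1_general k L n a hgen hlf hnil
end

section
/- In Der(k[x,y]), for k ≥ 2 and l ≥ 1, iterated brackets satisfy: ad^n_{∂_{l,−1}}(∂_{−1,k}) = c_n ∂_{nl−1, k−n} with c_n ≠ 0 for n = 1, …, k+1. In particular ad^{k+1}_{∂_{l,−1}}(∂_{−1,k}) is a nonzero multiple of ∂_{(k+1)l−1, −1}. -/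
open MvPolynomial

/-- The homogeneous zero-divergence derivation
`∂_{a,b} = (b+1)x^{a+1}y^b ∂/∂x − (a+1)x^a y^{b+1} ∂/∂y` of `k[x,y]`. -/
noncomputable def pd (k : Type) [CommRing k] (a b : ℤ) :
    Derivation k (MvPolynomial (Fin 2) k) (MvPolynomial (Fin 2) k) :=
  MvPolynomial.mkDerivation k fun i =>
    if i = 0 then C ((b + 1 : ℤ) : k) * X 0 ^ (a + 1).toNat * X 1 ^ b.toNat
    else C ((-(a + 1) : ℤ) : k) * X 0 ^ a.toNat * X 1 ^ (b + 1).toNat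

lemma pd_X0 (k : Type) [CommRing k] (a b : ℤ) :
    pd k a b (X 0) = C ((b + 1 : ℤ) : k) * X 0 ^ (a + 1).toNat * X 1 ^ b.toNat := by
  simp [pd, mkDerivation_X]

lemma pd_X1 (k : Type) [CommRing k] (a b : ℤ) :
    pd k a b (X 1) = C ((-(a + 1) : ℤ) : k) * X 0 ^ a.toNat * X 1 ^ (b + 1).toNat := by
  simp [pd, mkDerivation_X]

lemma bracket_pd (k : Type) [CommRing k] (M A B : ℕ) :
    ⁅pd k ((M : ℤ) + 1) (-1), pd k ((A : ℤ) - 1) (B : ℤ)⁆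
      = ((-(((M:ℤ)+2)*((B:ℤ)+1)) : ℤ) : k) • pd k ((M : ℤ) + (A : ℤ)) ((B : ℤ) - 1) := by
  have e1 : ((A : ℤ) - 1 + 1) = (A : ℤ) := by ring
  have e2 : ((A : ℤ) - 1).toNat = A - 1 := by exact_mod_cast Int.toNat_sub A 1
  have e3 : ((B : ℤ) - 1).toNat = B - 1 := by exact_mod_cast Int.toNat_sub B 1
  have e4 : ((B : ℤ) - 1 + 1) = (B : ℤ) := by ring
  have e5 : ((M : ℤ) + (A : ℤ) + 1).toNat = M + A + 1 := by
    exact_mod_cast Int.toNat_natCast (M + A + 1)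
  have e6 : ((M : ℤ) + (A : ℤ)).toNat = M + A := by exact_mod_cast Int.toNat_natCast (M + A)
  apply derivation_ext
  intro i
  fin_cases i
  · show _ = _
    simp only [Derivation.commutator_apply, Derivation.smul_apply, pd_X0, pd_X1, e1, e2, e3, e4,
      e5, e6, Int.toNat_natCast, Int.toNat_add, Int.toNat_one]
    norm_num
    simp only [Derivation.leibniz, Derivation.leibniz_pow, derivation_C, pd_X0, pd_X1]
    norm_num
    rw [e5]
    simp only [MvPolynomial.smul_eq_C_mul, map_intCast, map_add, map_mul, map_natCast, map_ofNat, map_one]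
    push_cast
    ring
  · show _ = _
    simp only [Derivation.commutator_apply, Derivation.smul_apply, pd_X0, pd_X1, e1, e2, e3, e4,
      e5, e6, Int.toNat_natCast, Int.toNat_add, Int.toNat_one]
    norm_num
    simp only [Derivation.leibniz, Derivation.leibniz_pow, derivation_C, pd_X0, pd_X1]
    norm_num
    rw [e6]
    simp only [MvPolynomial.smul_eq_C_mul, map_intCast, map_add, map_mul, map_natCast, map_ofNat, map_one]
    rcases A with _ | A
    · push_cast
      ring
    · simp only [Nat.add_sub_cancel]
      push_cast
      ring

lemma lie_smul_der (k : Type) [CommRing k] (c : k)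
    (D1 D2 : Derivation k (MvPolynomial (Fin 2) k) (MvPolynomial (Fin 2) k)) :
    ⁅D1, c • D2⁆ = c • ⁅D1, D2⁆ := by
  ext a
  simp [Derivation.commutator_apply, mul_sub, smul_sub]

lemma aux (k : Type) [Field k] [CharZero k] (K : ℤ) (M : ℕ) (hK : 2 ≤ K) :
    ∀ n : ℕ, (n : ℤ) ≤ K + 1 →
      ∃ c : k, c ≠ 0 ∧
        (fun v => ⁅pd k ((M : ℤ) + 1) (-1), v⁆)^[n] (pd k (-1) K) =
          c • pd k ((n : ℤ) * ((M : ℤ) + 1) - 1) (K - (n : ℤ)) := by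
  intro n
  induction n with
  | zero =>
    intro _
    refine ⟨1, one_ne_zero, ?_⟩
    norm_num
  | succ n ih =>
    intro h
    have hn : (n : ℤ) ≤ K := by push_cast at h ⊢; omega
    obtain ⟨c, hc, hE⟩ := ih (by push_cast at h ⊢; omega)
    set A : ℕ := n * (M + 1) with hA
    set B : ℕ := (K - n).toNat with hB
    have hBc : (B : ℤ) = K - n := Int.toNat_of_nonneg (by omega)
    have h1 : ((n : ℤ) * ((M : ℤ) + 1) - 1) = (A : ℤ) - 1 := by push_cast [hA]; ring
    have h2 : (K - (n : ℤ)) = (B : ℤ) := hBc.symm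
    have h3 : ((M : ℤ) + (A : ℤ)) = ((n : ℕ) + 1 : ℤ) * ((M : ℤ) + 1) - 1 := by
      push_cast [hA]; ring
    have h4 : ((B : ℤ) - 1) = K - ((n : ℕ) + 1 : ℤ) := by rw [hBc]; ring
    refine ⟨c * ((-(((M:ℤ)+2)*((B:ℤ)+1)) : ℤ) : k), ?_, ?_⟩
    · refine mul_ne_zero hc ?_
      rw [Int.cast_ne_zero]
      have : (0:ℤ) < ((M:ℤ)+2)*((B:ℤ)+1) := by positivity
      omega
    · rw [Function.iterate_succ_apply', hE, h1, h2]
      rw [lie_smul_der, bracket_pd, h3, h4, smul_smul]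
      push_cast
      ring_nf

/-- For `K ≥ 2`, `l ≥ 1`, the iterated brackets satisfy
`ad^n_{∂_{l,−1}}(∂_{−1,K}) = c_n ∂_{nl−1, K−n}` with `c_n ≠ 0` for `n = 1, …, K+1`;
in particular `ad^{K+1}_{∂_{l,−1}}(∂_{−1,K})` is a nonzero multiple of
`∂_{(K+1)l−1, −1}`. -/
theorem stmt16 (k : Type) [Field k] [CharZero k] (K l : ℤ) (hK : 2 ≤ K) (hl : 1 ≤ l) :
    ∀ n : ℕ, 1 ≤ n → (n : ℤ) ≤ K + 1 →
      ∃ c : k, c ≠ 0 ∧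
        (fun v => ⁅pd k l (-1), v⁆)^[n] (pd k (-1) K) =
          c • pd k ((n : ℤ) * l - 1) (K - (n : ℤ)) := by
  intro n _ h2
  obtain ⟨M, rfl⟩ : ∃ M : ℕ, l = (M : ℤ) + 1 := ⟨(l-1).toNat, by omega⟩
  exact aux k K M hK n h2
end

section
/- A Lie subalgebra 𝔥 of Der(k[x,y]) that contains homogeneous derivations ∂_{−1,k} and ∂_{l,−1} with k, l ≥ 1 is not solvable. -/
/-!
The derivation `pd k a b` is the Hamiltonian vector field `H_f = f_y ∂_x - f_x ∂_y` of
`f = x^(a+1) y^(b+1)`, and `[H_f, H_g] = H_(H_f g)`; on monomials,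
`[H_(x^p y^q), H_(x^r y^s)] = (q r - p s) H_(x^(p+r-1) y^(q+s-1))`.

If `H_(x^A)` and `H_(y^B)` with `A, B ≥ 2` lie in the `n`-th derived ideal of `𝔥`, their bracket
is a nonzero multiple of `H_(x^(A-1) y^(B-1))` in the `(n+1)`-st one. As derived ideals are ideals,
bracketing this `A - 1` times with `H_(y^B) ∈ 𝔥` (resp. `B - 1` times with `H_(x^A)`) yields, up to
scalars that are nonzero in characteristic zero, `H_(y^(A(B-1)))` (resp. `H_(x^(B(A-1)))`), whose
exponents are again at least `2`. Hence no derived ideal of `𝔥` vanishes.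
-/

open MvPolynomial

section Hamiltonian
variable {R : Type*} [CommRing R]

noncomputable def hamiltonian (f : MvPolynomial (Fin 2) R) :
    Derivation R (MvPolynomial (Fin 2) R) (MvPolynomial (Fin 2) R) :=
  pderiv 1 f • pderiv 0 - pderiv 0 f • pderiv 1

lemma hamiltonian_apply (f g : MvPolynomial (Fin 2) R) :
    hamiltonian f g = pderiv 1 f * pderiv 0 g - pderiv 0 f * pderiv 1 g := rfl

lemma hamiltonian_smul (c : R) (f : MvPolynomial (Fin 2) R) :
    hamiltonian (c • f) = c • hamiltonian f :=
  Derivation.ext fun g => by simp [hamiltonian_apply, smul_sub]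

lemma pderiv_pderiv_comm {σ : Type*} (i j : σ) (f : MvPolynomial σ R) :
    pderiv i (pderiv j f) = pderiv j (pderiv i f) := by
  classical
  induction f using MvPolynomial.induction_on with
  | C a => simp
  | add p q hp hq => simp [hp, hq]
  | mul_X p n ih =>
    simp only [Derivation.leibniz, pderiv_X, Pi.single_apply, smul_eq_mul, map_add, ih]
    split_ifs <;> simp only [Derivation.map_one_eq_zero, map_zero, mul_zero, zero_mul, add_zero,
      zero_add, mul_one, one_mul] <;> ring

lemma lie_hamiltonian (f g : MvPolynomial (Fin 2) R) :
    ⁅hamiltonian f, hamiltonian g⁆ = hamiltonian (hamiltonian f g) := by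
  have hf := pderiv_pderiv_comm (0 : Fin 2) 1 f
  have hg := pderiv_pderiv_comm (0 : Fin 2) 1 g
  apply derivation_ext
  intro i
  fin_cases i <;>
  · simp only [Fin.zero_eta, Fin.mk_one, Fin.isValue, Derivation.commutator_apply,
      hamiltonian_apply, map_sub, Derivation.leibniz, smul_eq_mul, pderiv_X_self,
      pderiv_X_of_ne one_ne_zero, pderiv_X_of_ne zero_ne_one, map_zero,
      Derivation.map_one_eq_zero, hf, hg]
    ring

lemma natCast_mul_pow_pred_mul_pow {S : Type*} [CommSemiring S] (x : S) (n m : ℕ) :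
    (n : S) * x ^ (n - 1) * x ^ m = n * x ^ (n + m - 1) := by
  rcases n with _ | n
  · simp
  · rw [mul_assoc, ← pow_add]; congr 3; omega

lemma hamiltonian_monomial_apply (p q r s : ℕ) :
    hamiltonian (X 0 ^ p * X 1 ^ q) (X 0 ^ r * X 1 ^ s : MvPolynomial (Fin 2) R) =
      (q * r - p * s : R) • (X 0 ^ (p + r - 1) * X 1 ^ (q + s - 1)) := by
  simp only [hamiltonian_apply, Derivation.leibniz, Derivation.leibniz_pow, smul_eq_mul,
    nsmul_eq_mul, pderiv_X_self, pderiv_X_of_ne one_ne_zero, pderiv_X_of_ne zero_ne_one]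
  have hr := natCast_mul_pow_pred_mul_pow (X 0 : MvPolynomial (Fin 2) R) r p
  have hp := natCast_mul_pow_pred_mul_pow (X 0 : MvPolynomial (Fin 2) R) p r
  have hq := natCast_mul_pow_pred_mul_pow (X 1 : MvPolynomial (Fin 2) R) q s
  have hs := natCast_mul_pow_pred_mul_pow (X 1 : MvPolynomial (Fin 2) R) s q
  rw [add_comm r] at hr
  rw [add_comm s] at hs
  rw [smul_eq_C_mul]
  simp only [map_sub, map_mul, map_natCast]
  linear_combination (↑q * X 1 ^ (q - 1) * X 1 ^ s) * hr + (↑r * X 0 ^ (p + r - 1)) * hq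
    - (↑s * X 1 ^ (s - 1) * X 1 ^ q) * hp - (↑p * X 0 ^ (p + r - 1)) * hs

lemma lie_hamiltonian_monomial (p q r s : ℕ) :
    ⁅hamiltonian (X 0 ^ p * X 1 ^ q : MvPolynomial (Fin 2) R),
      hamiltonian (X 0 ^ r * X 1 ^ s : MvPolynomial (Fin 2) R)⁆ =
      (q * r - p * s : R) • hamiltonian (X 0 ^ (p + r - 1) * X 1 ^ (q + s - 1)) := by
  rw [lie_hamiltonian, hamiltonian_monomial_apply, hamiltonian_smul]

lemma hamiltonian_X_one_pow_ne_zero [IsDomain R] [CharZero R] {n : ℕ} (hn : n ≠ 0) :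
    hamiltonian (X 1 ^ n : MvPolynomial (Fin 2) R) ≠ 0 := by
  intro h
  have h0 := congrArg (fun D => D (X 0)) h
  simp [hamiltonian_apply, Derivation.leibniz_pow, hn, X_ne_zero] at h0

end Hamiltonian

section DerivedSeries
variable {R L : Type*} [CommRing R] [LieRing L] [LieAlgebra R L] (H : LieSubalgebra R L)

def MemDerivedSeries (n : ℕ) (x : L) : Prop :=
  ∃ hx : x ∈ H, (⟨x, hx⟩ : H) ∈ LieAlgebra.derivedSeries R H n

variable {H}

lemma memDerivedSeries_zero {x : L} (hx : x ∈ H) : MemDerivedSeries H 0 x :=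
  ⟨hx, by simp⟩

lemma MemDerivedSeries.lie_left {n : ℕ} {x y : L} (hx : x ∈ H) (hy : MemDerivedSeries H n y) :
    MemDerivedSeries H n ⁅x, y⁆ :=
  ⟨H.lie_mem hx hy.1, (LieAlgebra.derivedSeries R H n).lie_mem (x := ⟨x, hx⟩) hy.2⟩

lemma MemDerivedSeries.lie {n : ℕ} {x y : L} (hx : MemDerivedSeries H n x)
    (hy : MemDerivedSeries H n y) : MemDerivedSeries H (n + 1) ⁅x, y⁆ :=
  ⟨H.lie_mem hx.1 hy.1, by
    rw [LieAlgebra.derivedSeries_def, LieAlgebra.derivedSeriesOfIdeal_succ]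
    exact LieSubmodule.lie_mem_lie hx.2 hy.2⟩

lemma MemDerivedSeries.of_smul {K : Type*} [Field K] [LieAlgebra K L] {H : LieSubalgebra K L}
    {n : ℕ} {c : K} {x : L} (hc : c ≠ 0) (h : MemDerivedSeries H n (c • x)) :
    MemDerivedSeries H n x := by
  have hx : x = c⁻¹ • c • x := by rw [inv_smul_smul₀ hc]
  rw [hx]
  exact ⟨H.smul_mem c⁻¹ h.1, (LieAlgebra.derivedSeries K H n).smul_mem c⁻¹ h.2⟩

lemma LieAlgebra.IsSolvable.exists_memDerivedSeries_eq_zero [LieAlgebra.IsSolvable H] :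
    ∃ n, ∀ x, MemDerivedSeries H n x → x = 0 := by
  obtain ⟨n, hn⟩ := LieAlgebra.IsSolvable.solvable R H
  refine ⟨n, fun x ⟨hx, hxn⟩ => ?_⟩
  rw [hn, LieSubmodule.mem_bot] at hxn
  exact congrArg Subtype.val hxn

end DerivedSeries

section Pd
variable {k : Type} [CommRing k]

lemma pd_eq_hamiltonian (a b : ℤ) (ha : -1 ≤ a) (hb : -1 ≤ b) :
    pd k a b = hamiltonian (X 0 ^ (a + 1).toNat * X 1 ^ (b + 1).toNat) := by
  obtain ⟨m, rfl⟩ : ∃ m : ℕ, a = m - 1 := ⟨(a + 1).toNat, by omega⟩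
  obtain ⟨n, rfl⟩ : ∃ n : ℕ, b = n - 1 := ⟨(b + 1).toNat, by omega⟩
  have hm : ((m : ℤ) - 1).toNat = m - 1 := by omega
  have hn : ((n : ℤ) - 1).toNat = n - 1 := by omega
  apply derivation_ext
  intro i
  fin_cases i <;>
  · simp only [pd, Fin.zero_eta, Fin.mk_one, Fin.isValue, mkDerivation_X, ↓reduceIte,
      one_ne_zero, hamiltonian_apply, Derivation.leibniz, Derivation.leibniz_pow, smul_eq_mul,
      nsmul_eq_mul, pderiv_X_self, pderiv_X_of_ne one_ne_zero, pderiv_X_of_ne zero_ne_one,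
      sub_add_cancel, Int.toNat_natCast, Int.cast_natCast, Int.cast_neg, C_neg, map_natCast, hm, hn]
    ring

end Pd

section CharZero
variable {k : Type} [Field k] [CharZero k]
  {H : LieSubalgebra k (Derivation k (MvPolynomial (Fin 2) k) (MvPolynomial (Fin 2) k))}

lemma MemDerivedSeries.hamiltonian_X_one_pow {n b r s : ℕ}
    (hH : hamiltonian (X 1 ^ (b + 1)) ∈ H)
    (h : MemDerivedSeries H n (hamiltonian (X 0 ^ r * X 1 ^ s))) :
    MemDerivedSeries H n (hamiltonian (X 1 ^ (s + r * b))) := by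
  induction r generalizing s with
  | zero => simpa using h
  | succ r ih =>
    have hbr := h.lie_left hH
    rw [← one_mul (X 1 ^ (b + 1)), ← pow_zero (X 0), lie_hamiltonian_monomial] at hbr
    rw [show 0 + (r + 1) - 1 = r by omega, show b + 1 + s - 1 = s + b by omega] at hbr
    have hc : ((b + 1 : ℕ) * (r + 1 : ℕ) - (0 : ℕ) * s : k) ≠ 0 := by
      simp [Nat.cast_add_one_ne_zero]
    have := ih (hbr.of_smul hc)
    rwa [add_assoc, show b + r * b = (r + 1) * b by ring] at this

lemma MemDerivedSeries.hamiltonian_X_zero_pow {n a r s : ℕ}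
    (hH : hamiltonian (X 0 ^ (a + 1)) ∈ H)
    (h : MemDerivedSeries H n (hamiltonian (X 0 ^ r * X 1 ^ s))) :
    MemDerivedSeries H n (hamiltonian (X 0 ^ (r + s * a))) := by
  induction s generalizing r with
  | zero => simpa using h
  | succ s ih =>
    have hbr := h.lie_left hH
    rw [← mul_one (X 0 ^ (a + 1)), ← pow_zero (X 1), lie_hamiltonian_monomial] at hbr
    rw [show a + 1 + r - 1 = r + a by omega, show 0 + (s + 1) - 1 = s by omega] at hbr
    have hc : ((0 : ℕ) * r - (a + 1 : ℕ) * (s + 1 : ℕ) : k) ≠ 0 := by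
      simp [Nat.cast_add_one_ne_zero]
    have := ih (hbr.of_smul hc)
    rwa [add_assoc, show a + s * a = (s + 1) * a by ring] at this

lemma MemDerivedSeries.exists_hamiltonian_succ {n a b : ℕ}
    (hx : MemDerivedSeries H n (hamiltonian (X 0 ^ (a + 2))))
    (hy : MemDerivedSeries H n (hamiltonian (X 1 ^ (b + 2)))) :
    ∃ a' b' : ℕ, MemDerivedSeries H (n + 1) (hamiltonian (X 0 ^ (a' + 2))) ∧
      MemDerivedSeries H (n + 1) (hamiltonian (X 1 ^ (b' + 2))) := by
  have hbr := hy.lie hx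
  rw [← one_mul (X 1 ^ (b + 2)), ← pow_zero (X 0), ← mul_one (X 0 ^ (a + 2)), ← pow_zero (X 1),
    lie_hamiltonian_monomial] at hbr
  rw [show 0 + (a + 2) - 1 = a + 1 by omega, show b + 2 + 0 - 1 = b + 1 by omega] at hbr
  have hc : ((b + 2 : ℕ) * (a + 2 : ℕ) - (0 : ℕ) * (0 : ℕ) : k) ≠ 0 := by
    simp only [Nat.cast_zero, mul_zero, sub_zero, ← Nat.cast_mul]
    exact Nat.cast_ne_zero.mpr (by positivity)
  have h := hbr.of_smul hc
  refine ⟨a * b + 2 * a + b, a * b + a + 2 * b, ?_, ?_⟩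
  · rw [show a * b + 2 * a + b + 2 = a + 1 + (b + 1) * (a + 1) by ring]
    exact h.hamiltonian_X_zero_pow hx.1
  · rw [show a * b + a + 2 * b + 2 = b + 1 + (a + 1) * (b + 1) by ring]
    exact h.hamiltonian_X_one_pow hy.1

lemma exists_memDerivedSeries_hamiltonian {a b : ℕ} (hx : hamiltonian (X 0 ^ (a + 2)) ∈ H)
    (hy : hamiltonian (X 1 ^ (b + 2)) ∈ H) (n : ℕ) :
    ∃ a b : ℕ, MemDerivedSeries H n (hamiltonian (X 0 ^ (a + 2))) ∧
      MemDerivedSeries H n (hamiltonian (X 1 ^ (b + 2))) := by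
  induction n with
  | zero => exact ⟨a, b, memDerivedSeries_zero hx, memDerivedSeries_zero hy⟩
  | succ n ih =>
    obtain ⟨a, b, hx, hy⟩ := ih
    exact hx.exists_hamiltonian_succ hy

end CharZero

/-- A Lie subalgebra of `Der(k[x,y])` containing `∂_{−1,K}` and
`∂_{l,−1}` with `K, l ≥ 1` is not solvable. -/
theorem stmt17 (k : Type) [Field k] [CharZero k] (K l : ℤ) (hK : 1 ≤ K) (hl : 1 ≤ l)
    (H : LieSubalgebra k (Derivation k (MvPolynomial (Fin 2) k) (MvPolynomial (Fin 2) k)))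
    (h1 : pd k (-1) K ∈ H) (h2 : pd k l (-1) ∈ H) :
    ¬ LieAlgebra.IsSolvable ↥H := by
  intro hsolv
  obtain ⟨n, hn⟩ := LieAlgebra.IsSolvable.exists_memDerivedSeries_eq_zero (H := H)
  have hy : hamiltonian (X 1 ^ ((K - 1).toNat + 2)) ∈ H := by
    rwa [pd_eq_hamiltonian _ _ le_rfl (by omega), show (K + 1).toNat = (K - 1).toNat + 2 by omega,
      neg_add_cancel, Int.toNat_zero, pow_zero, one_mul] at h1
  have hx : hamiltonian (X 0 ^ ((l - 1).toNat + 2)) ∈ H := by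
    rwa [pd_eq_hamiltonian _ _ (by omega) le_rfl, show (l + 1).toNat = (l - 1).toNat + 2 by omega,
      neg_add_cancel, Int.toNat_zero, pow_zero, mul_one] at h2
  obtain ⟨a, b, -, hb⟩ := exists_memDerivedSeries_hamiltonian hx hy n
  exact hamiltonian_X_one_pow_ne_zero (by omega) (hn _ hb)
end
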